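/- Let V₁, V₂ be nonzero subspaces of a finite-dimensional complex inner product space with V₁ ∩ V₂ = {0}. Let δ := the maximum of |⟨v₁, v₂⟩| over unit vectors v₁ ∈ V₁ and v₂ ∈ V₂ (so δ < 1). Let V₂' be the orthogonal complement of V₁ inside V₁ + V₂, let Π₂ and Π₂' denote the orthogonal projections onto V₂ and V₂' respectively, and set σ₂ := Π₂/dim V₂ and σ₂' := Π₂'/dim V₂' (the totally mixed states on V₂ and V₂'). Then the trace norm satisfies ‖σ₂ − σ₂'‖₁ ≤ 2·δ^{1/2}·(1 − δ²)^{−1/4}. -/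

import Mathlib

open scoped ComplexInnerProductSpace

noncomputable def traceNorm {E : Type} [NormedAddCommGroup E] [InnerProductSpace ℂ E]
    [FiniteDimensional ℂ E] (A : E →ₗ[ℂ] E) : ℝ :=
  ∑ i : Fin (Module.finrank ℂ E),
    Real.sqrt ((LinearMap.isSymmetric_adjoint_mul_self A).eigenvalues rfl i)

noncomputable def projOp {E : Type} [NormedAddCommGroup E] [InnerProductSpace ℂ E]
    [FiniteDimensional ℂ E] (K : Submodule ℂ E) : E →ₗ[ℂ] E :=
  K.subtype ∘ₗ (K.orthogonalProjectionOnto : E →ₗ[ℂ] K)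

/-! For `v ∈ V₂` the component of `v` orthogonal to `V₂' = V₁ᗮ ⊓ (V₁ ⊔ V₂)` is its projection
onto `V₁`, of length at most `δ ‖v‖`. As `dim V₂' = dim V₂ = d`, this gives
`tr (Π₂' Π₂) ≥ d (1 - δ²)`, hence `tr ((σ₂ - σ₂')²) ≤ 2 δ² / d`. The operator `σ₂ - σ₂'` has
rank at most `2d`, so Cauchy–Schwarz on its singular values yields `‖σ₂ - σ₂'‖₁ ≤ 2δ`, which is
below the stated bound because `δ < 1`. -/

open Module

namespace LinearMap

variable {𝕜 : Type*} [RCLike 𝕜]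
  {E : Type*} [NormedAddCommGroup E] [InnerProductSpace 𝕜 E] [FiniteDimensional 𝕜 E]
  {F : Type*} [NormedAddCommGroup F] [InnerProductSpace 𝕜 F] [FiniteDimensional 𝕜 F]

theorem sum_range_finrank_range_singularValues (T : E →ₗ[𝕜] F) {f : ℝ → ℝ} (hf : f 0 = 0) :
    ∑ i ∈ Finset.range (finrank 𝕜 T.range), f (T.singularValues i) =
      ∑ i : Fin (finrank 𝕜 E), f (T.singularValues i) := by
  rw [Fin.sum_univ_eq_sum_range (fun i ↦ f (T.singularValues i))]
  refine Finset.sum_subset (Finset.range_subset_range.2 T.finrank_range_le) fun i _ hi ↦ ?_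
  rw [T.singularValues_eq_zero_iff_le_finrank_range.2 (by simpa using hi), hf]

theorem sum_sq_singularValues (T : E →ₗ[𝕜] F) :
    ∑ i : Fin (finrank 𝕜 E), T.singularValues i ^ 2 =
      RCLike.re (trace 𝕜 E (adjoint T ∘ₗ T)) := by
  simp only [T.sq_singularValues_fin rfl,
    T.isSymmetric_adjoint_comp_self.re_trace_eq_sum_eigenvalues rfl]

end LinearMap

section TraceNorm

variable {E : Type} [NormedAddCommGroup E] [InnerProductSpace ℂ E] [FiniteDimensional ℂ E]

theorem traceNorm_eq_sum_singularValues (A : E →ₗ[ℂ] E) :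
    traceNorm A = ∑ i ∈ Finset.range (finrank ℂ A.range), A.singularValues i := by
  rw [A.sum_range_finrank_range_singularValues (f := fun x ↦ x) rfl]
  simp only [traceNorm, A.singularValues_fin rfl]

theorem traceNorm_sq_le_finrank_range_mul_re_trace (A : E →ₗ[ℂ] E) :
    traceNorm A ^ 2 ≤
      finrank ℂ A.range * (LinearMap.trace ℂ E (LinearMap.adjoint A ∘ₗ A)).re := by
  calc traceNorm A ^ 2
      ≤ finrank ℂ A.range * ∑ i ∈ Finset.range (finrank ℂ A.range), A.singularValues i ^ 2 := by
        simpa [traceNorm_eq_sum_singularValues] using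
          sq_sum_le_card_mul_sum_sq (s := Finset.range (finrank ℂ A.range)) (f := A.singularValues)
    _ = _ := by
        rw [A.sum_range_finrank_range_singularValues (f := (· ^ 2)) (zero_pow two_ne_zero),
          A.sum_sq_singularValues]
        rfl

end TraceNorm

namespace Submodule

section Projection

variable {E : Type} [NormedAddCommGroup E] [InnerProductSpace ℂ E] [FiniteDimensional ℂ E]
  (K L : Submodule ℂ E)

theorem projOp_apply (v : E) : projOp K v = K.starProjection v := rfl

theorem projOp_comp_projOp : projOp K ∘ₗ projOp K = projOp K :=
  congrArg ContinuousLinearMap.toLinearMap K.isIdempotentElem_starProjection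

theorem trace_projOp : LinearMap.trace ℂ E (projOp K) = finrank ℂ K := by
  rw [projOp, LinearMap.trace_comp_comm']
  have : (K.orthogonalProjectionOnto : E →ₗ[ℂ] K) ∘ₗ K.subtype = LinearMap.id := by
    ext x
    simp
  rw [this, LinearMap.trace_id]

theorem re_trace_projOp_comp_projOp :
    (LinearMap.trace ℂ E (projOp L ∘ₗ projOp K)).re =
      ∑ i, ‖projOp L (stdOrthonormalBasis ℂ K i)‖ ^ 2 := by
  change (LinearMap.trace ℂ E ((projOp L ∘ₗ K.subtype) ∘ₗ
    (K.orthogonalProjectionOnto : E →ₗ[ℂ] K))).re = _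
  rw [LinearMap.trace_comp_comm', LinearMap.trace_eq_sum_inner _ (stdOrthonormalBasis ℂ K),
    Complex.re_sum]
  refine Finset.sum_congr rfl fun i _ ↦ ?_
  rw [LinearMap.comp_apply, ContinuousLinearMap.coe_coe,
    inner_orthogonalProjectionOnto_eq_of_mem_left, LinearMap.comp_apply, subtype_apply,
    projOp_apply, ← inner_starProjection_left_eq_right]
  exact L.re_inner_starProjection_eq_normSq _

theorem re_trace_projOp_sub_comp_projOp_sub :
    (LinearMap.trace ℂ E ((projOp K - projOp L) ∘ₗ (projOp K - projOp L))).re =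
      finrank ℂ K + finrank ℂ L - 2 * (LinearMap.trace ℂ E (projOp L ∘ₗ projOp K)).re := by
  rw [LinearMap.sub_comp, LinearMap.comp_sub, LinearMap.comp_sub, projOp_comp_projOp,
    projOp_comp_projOp, map_sub, map_sub, map_sub, LinearMap.trace_comp_comm' (projOp K),
    trace_projOp, trace_projOp]
  simp only [Complex.sub_re, Complex.natCast_re]
  ring

variable {K L} {ε : ℝ}

theorem one_sub_sq_mul_norm_sq_le_norm_sq_projOp {v : E}
    (h : ‖v - projOp L v‖ ≤ ε * ‖v‖) : (1 - ε ^ 2) * ‖v‖ ^ 2 ≤ ‖projOp L v‖ ^ 2 := by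
  have hpyth := L.norm_sq_eq_add_norm_sq_starProjection v
  rw [starProjection_orthogonal_val, ← projOp_apply] at hpyth
  have := pow_le_pow_left₀ (norm_nonneg _) h 2
  nlinarith

theorem one_sub_sq_mul_finrank_le_re_trace_projOp_comp_projOp
    (h : ∀ v ∈ K, ‖v - projOp L v‖ ≤ ε * ‖v‖) :
    (1 - ε ^ 2) * finrank ℂ K ≤ (LinearMap.trace ℂ E (projOp L ∘ₗ projOp K)).re := by
  set b := stdOrthonormalBasis ℂ K
  calc (1 - ε ^ 2) * finrank ℂ K = ∑ i, (1 - ε ^ 2) * ‖(b i : E)‖ ^ 2 := by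
        simp only [norm_coe, b.orthonormal.1 _, one_pow, mul_one, Finset.sum_const,
          Finset.card_univ, Fintype.card_fin, nsmul_eq_mul]
        ring
    _ ≤ _ := by
        rw [re_trace_projOp_comp_projOp]
        exact Finset.sum_le_sum fun i _ ↦ one_sub_sq_mul_norm_sq_le_norm_sq_projOp (h _ (b i).2)

theorem re_trace_projOp_sub_comp_projOp_sub_le (hKL : finrank ℂ K = finrank ℂ L)
    (h : ∀ v ∈ K, ‖v - projOp L v‖ ≤ ε * ‖v‖) :
    (LinearMap.trace ℂ E ((projOp K - projOp L) ∘ₗ (projOp K - projOp L))).re ≤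
      2 * ε ^ 2 * finrank ℂ K := by
  rw [re_trace_projOp_sub_comp_projOp_sub, ← hKL]
  linarith [one_sub_sq_mul_finrank_le_re_trace_projOp_comp_projOp h]

theorem traceNorm_smul_projOp_sub_smul_projOp_le (hKL : finrank ℂ K = finrank ℂ L) (hε : 0 ≤ ε)
    (h : ∀ v ∈ K, ‖v - projOp L v‖ ≤ ε * ‖v‖) :
    traceNorm ((finrank ℂ K : ℂ)⁻¹ • projOp K - (finrank ℂ L : ℂ)⁻¹ • projOp L) ≤ 2 * ε := by
  rw [← hKL, ← smul_sub]
  set d := finrank ℂ K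
  set A := (d : ℂ)⁻¹ • (projOp K - projOp L) with hA
  have hrank : finrank ℂ A.range ≤ 2 * d := by
    have hle : A.range ≤ K ⊔ L := by
      rintro _ ⟨x, rfl⟩
      exact smul_mem _ _ (sub_mem (mem_sup_left (K.starProjection_apply_mem x))
        (mem_sup_right (L.starProjection_apply_mem x)))
    have := finrank_add_le_finrank_add_finrank K L
    have := finrank_mono hle
    omega
  have hAsymm : A.IsSymmetric :=
    (K.starProjection_isSymmetric.sub L.starProjection_isSymmetric).smul (by simp)
  have htrace : (LinearMap.trace ℂ E (LinearMap.adjoint A ∘ₗ A)).re ≤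
      (d : ℝ)⁻¹ ^ 2 * (2 * ε ^ 2 * d) := by
    have hd : (d : ℂ)⁻¹ * (d : ℂ)⁻¹ = (((d : ℝ)⁻¹ ^ 2 : ℝ) : ℂ) := by push_cast; ring
    rw [hAsymm.adjoint_eq, hA, LinearMap.smul_comp, LinearMap.comp_smul, smul_smul, map_smul,
      smul_eq_mul, hd, Complex.re_ofReal_mul]
    exact mul_le_mul_of_nonneg_left (re_trace_projOp_sub_comp_projOp_sub_le hKL h)
      (by positivity)
  have hnonneg : 0 ≤ (LinearMap.trace ℂ E (LinearMap.adjoint A ∘ₗ A)).re :=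
    le_of_le_of_eq (Finset.sum_nonneg fun i _ ↦ sq_nonneg _) A.sum_sq_singularValues
  have hsq : traceNorm A ^ 2 ≤ (2 * ε) ^ 2 :=
    calc traceNorm A ^ 2
        ≤ finrank ℂ A.range * (LinearMap.trace ℂ E (LinearMap.adjoint A ∘ₗ A)).re :=
          traceNorm_sq_le_finrank_range_mul_re_trace A
      _ ≤ (2 * d) * ((d : ℝ)⁻¹ ^ 2 * (2 * ε ^ 2 * d)) :=
          mul_le_mul (by exact_mod_cast hrank) htrace hnonneg (by positivity)
      _ ≤ (2 * ε) ^ 2 := by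
          rcases eq_or_ne d 0 with hd | hd
          · simp only [hd, CharP.cast_eq_zero, mul_zero]
            positivity
          · exact le_of_eq (by field_simp)
  exact (abs_le_of_sq_le_sq' hsq (by positivity)).2

end Projection

section Overlap

open scoped InnerProductSpace

variable {𝕜 : Type*} [RCLike 𝕜] {E : Type*} [NormedAddCommGroup E] [InnerProductSpace 𝕜 E]
  {V₁ V₂ : Submodule 𝕜 E}

theorem norm_inner_le_mul_of_mem_upperBounds {δ : ℝ}
    (hδ : δ ∈ upperBounds
      {x : ℝ | ∃ v₁ ∈ V₁, ∃ v₂ ∈ V₂, ‖v₁‖ = 1 ∧ ‖v₂‖ = 1 ∧ x = ‖⟪v₁, v₂⟫_𝕜‖})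
    {v₁ v₂ : E} (hv₁ : v₁ ∈ V₁) (hv₂ : v₂ ∈ V₂) : ‖⟪v₁, v₂⟫_𝕜‖ ≤ δ * (‖v₁‖ * ‖v₂‖) := by
  rcases eq_or_ne v₁ 0 with rfl | h₁
  · simp
  rcases eq_or_ne v₂ 0 with rfl | h₂
  · simp
  have := hδ ⟨(‖v₁‖⁻¹ : 𝕜) • v₁, smul_mem _ _ hv₁, (‖v₂‖⁻¹ : 𝕜) • v₂, smul_mem _ _ hv₂,
    norm_smul_inv_norm h₁, norm_smul_inv_norm h₂, rfl⟩
  simp only [inner_smul_left, inner_smul_right, norm_mul, RCLike.norm_conj, norm_inv,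
    RCLike.norm_ofReal, abs_norm] at this
  rw [← mul_assoc, ← mul_inv, inv_mul_le_iff₀ (by positivity)] at this
  exact this.trans_eq (by ring)

theorem norm_inner_lt_one_of_inf_eq_bot (h : V₁ ⊓ V₂ = ⊥)
    {v₁ v₂ : E} (hv₁ : v₁ ∈ V₁) (hv₂ : v₂ ∈ V₂) (h₁ : ‖v₁‖ = 1) (h₂ : ‖v₂‖ = 1) :
    ‖⟪v₁, v₂⟫_𝕜‖ < 1 := by
  refine (norm_inner_le_norm v₁ v₂).trans_eq (by rw [h₁, h₂, one_mul]) |>.lt_of_ne fun heq ↦ ?_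
  have hv₁0 : v₁ ≠ 0 := norm_ne_zero_iff.1 (h₁ ▸ one_ne_zero)
  have hv₂0 : v₂ ≠ 0 := norm_ne_zero_iff.1 (h₂ ▸ one_ne_zero)
  obtain ⟨r, -, rfl⟩ := (norm_inner_eq_norm_iff hv₁0 hv₂0).1 (by rw [heq, h₁, h₂, one_mul])
  exact hv₂0 ((mem_bot 𝕜).1 (h ▸ mem_inf.2 ⟨smul_mem _ r hv₁, hv₂⟩))

theorem finrank_orthogonal_inf_sup [FiniteDimensional 𝕜 E] (h : V₁ ⊓ V₂ = ⊥) :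
    finrank 𝕜 (V₁ᗮ ⊓ (V₁ ⊔ V₂) : Submodule 𝕜 E) = finrank 𝕜 V₂ := by
  have hsum := finrank_add_inf_finrank_orthogonal (le_sup_left : V₁ ≤ V₁ ⊔ V₂)
  have hsup := finrank_sup_add_finrank_inf_eq V₁ V₂
  rw [h, finrank_bot] at hsup
  omega

end Overlap

section ComplexOverlap

variable {E : Type} [NormedAddCommGroup E] [InnerProductSpace ℂ E] [FiniteDimensional ℂ E]

theorem norm_projOp_le_of_norm_inner_le {V₁ V₂ : Submodule ℂ E} {δ : ℝ} (hδ : 0 ≤ δ)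
    (h : ∀ v₁ ∈ V₁, ∀ v₂ ∈ V₂, ‖⟪v₁, v₂⟫‖ ≤ δ * (‖v₁‖ * ‖v₂‖)) {v : E} (hv : v ∈ V₂) :
    ‖projOp V₁ v‖ ≤ δ * ‖v‖ := by
  have hsq : ‖projOp V₁ v‖ * ‖projOp V₁ v‖ ≤ ‖projOp V₁ v‖ * (δ * ‖v‖) :=
    calc ‖projOp V₁ v‖ * ‖projOp V₁ v‖ = (⟪projOp V₁ v, v⟫).re := by
          rw [← sq]; exact (V₁.re_inner_starProjection_eq_normSq v).symm
      _ ≤ ‖⟪projOp V₁ v, v⟫‖ := Complex.re_le_norm _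
      _ ≤ _ := by
          rw [← mul_assoc, mul_comm _ δ, mul_assoc]
          exact h _ (V₁.starProjection_apply_mem v) _ hv
  rcases (norm_nonneg (projOp V₁ v)).eq_or_lt with h0 | hpos
  · rw [← h0]; positivity
  · exact le_of_mul_le_mul_left hsq hpos

theorem projOp_orthogonal_inf_apply {V W : Submodule ℂ E} (hVW : V ≤ W) {v : E} (hv : v ∈ W) :
    projOp (Vᗮ ⊓ W) v = v - projOp V v := by
  refine eq_starProjection_of_mem_orthogonal (mem_inf.2 ⟨V.sub_starProjection_mem_orthogonal v,
    sub_mem hv (hVW (V.starProjection_apply_mem v))⟩) ?_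
  rw [sub_sub_cancel]
  exact orthogonal_le inf_le_left (V.le_orthogonal_orthogonal (V.starProjection_apply_mem v))

end ComplexOverlap

end Submodule

theorem le_rpow_half_mul_one_sub_sq_rpow_neg_quarter {δ : ℝ} (h₀ : 0 ≤ δ) (h₁ : δ < 1) :
    δ ≤ δ ^ ((1 : ℝ) / 2) * (1 - δ ^ 2) ^ (-(1 : ℝ) / 4) := by
  have hhalf : δ ^ ((1 : ℝ) / 2) ≤ (1 - δ ^ 2) ^ (-(1 : ℝ) / 4) :=
    (Real.rpow_le_one h₀ h₁.le (by norm_num)).trans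
      (Real.one_le_rpow_of_pos_of_le_one_of_nonpos (by nlinarith) (by nlinarith) (by norm_num))
  calc δ = δ ^ ((1 : ℝ) / 2) * δ ^ ((1 : ℝ) / 2) := by
        rw [← Real.rpow_add' h₀ (by norm_num)]; norm_num
    _ ≤ _ := mul_le_mul_of_nonneg_left hhalf (by positivity)

open Submodule in
theorem mixed_state_perturbation {E : Type} [NormedAddCommGroup E]
    [InnerProductSpace ℂ E] [FiniteDimensional ℂ E]
    (V₁ V₂ : Submodule ℂ E) (hdisj : V₁ ⊓ V₂ = ⊥)
    (δ : ℝ)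
    (hδ : IsGreatest {x : ℝ | ∃ v₁ ∈ V₁, ∃ v₂ ∈ V₂,
        ‖v₁‖ = 1 ∧ ‖v₂‖ = 1 ∧ x = ‖⟪v₁, v₂⟫‖} δ) :
    traceNorm
        (((Module.finrank ℂ V₂ : ℂ))⁻¹ • projOp V₂ -
          ((Module.finrank ℂ (V₁ᗮ ⊓ (V₁ ⊔ V₂) : Submodule ℂ E) : ℂ))⁻¹ •
            projOp (V₁ᗮ ⊓ (V₁ ⊔ V₂))) ≤
      2 * δ ^ ((1 : ℝ) / 2) * (1 - δ ^ 2) ^ (-(1 : ℝ) / 4) := by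
  obtain ⟨v₁, hv₁, v₂, hv₂, hv₁1, hv₂1, hδv⟩ := hδ.1
  have hδ0 : 0 ≤ δ := hδv ▸ norm_nonneg _
  have hδ1 : δ < 1 := hδv ▸ norm_inner_lt_one_of_inf_eq_bot hdisj hv₁ hv₂ hv₁1 hv₂1
  have hclose : ∀ v ∈ V₂, ‖v - projOp (V₁ᗮ ⊓ (V₁ ⊔ V₂)) v‖ ≤ δ * ‖v‖ := fun v hv ↦ by
    rw [projOp_orthogonal_inf_apply le_sup_left (mem_sup_right hv), sub_sub_cancel]
    exact norm_projOp_le_of_norm_inner_le hδ0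
      (fun _ h₁ _ h₂ ↦ norm_inner_le_mul_of_mem_upperBounds hδ.2 h₁ h₂) hv
  calc _ ≤ 2 * δ := traceNorm_smul_projOp_sub_smul_projOp_le
          (finrank_orthogonal_inf_sup hdisj).symm hδ0 hclose
    _ ≤ _ := by
        rw [mul_assoc]
        exact mul_le_mul_of_nonneg_left (le_rpow_half_mul_one_sub_sq_rpow_neg_quarter hδ0 hδ1)
          zero_le_two
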